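/- Let ψ be an eligible kernel function with inverse ϱ, let N ≥ 1, let n_1, …, n_N ≥ 2, and let v = (v^1, …, v^N) with each v^j ∈ Υ^{n_j}_+. Then δ(v) ≥ (1/(2√2))·ψ'(ϱ(2Ψ(v))). -/

import Mathlib

noncomputable section

open Real Finset

/-- Euclidean dot product of two vectors in `ℝ^n`. -/
def dotp {n : ℕ} (x y : Fin n → ℝ) : ℝ := ∑ i, x i * y i

/-- Euclidean norm of a vector in `ℝ^n`. -/
def enormEuc {n : ℕ} (x : Fin n → ℝ) : ℝ := Real.sqrt (∑ i, (x i) ^ 2)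

/-- The tail `x̄ = (x_3, …, x_n)` of a vector, embedded back into `ℝ^n`
(first two coordinates replaced by `0`). Indices are 0-based, so the tail
consists of the coordinates with index `≥ 2`. -/
def tl {n : ℕ} (x : Fin (n + 2) → ℝ) : Fin (n + 2) → ℝ :=
  fun i => if 2 ≤ (i : ℕ) then x i else 0

/-- The eigenvalue `λ1(x) = x_1 - x_2`. -/
def lam1 {n : ℕ} (x : Fin (n + 2) → ℝ) : ℝ := x 0 - x 1

/-- The eigenvalue `λ2(x) = x_1 + x_2 - √2 ‖x̄‖`. -/
def lam2 {n : ℕ} (x : Fin (n + 2) → ℝ) : ℝ := x 0 + x 1 - Real.sqrt 2 * enormEuc (tl x)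

/-- The eigenvalue `λ4(x) = x_1 + x_2 + √2 ‖x̄‖`. -/
def lam4 {n : ℕ} (x : Fin (n + 2) → ℝ) : ℝ := x 0 + x 1 + Real.sqrt 2 * enormEuc (tl x)

/-- The Jordan-type product `x ◇ s`. -/
def diam {n : ℕ} (x s : Fin (n + 2) → ℝ) : Fin (n + 2) → ℝ :=
  fun i =>
    if (i : ℕ) = 0 then dotp x s
    else if (i : ℕ) = 1 then x 1 * s 0 + x 0 * s 1 + dotp (tl x) (tl s)
    else (s 0 + s 1) * x i + (x 0 + x 1) * s i

/-- The trace `Tr(x) = 2 x_1`. -/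
def trace {n : ℕ} (x : Fin (n + 2) → ℝ) : ℝ := 2 * x 0

/-- `det̄(x) = (x_1 + x_2)² - 2 ‖x̄‖²`. -/
def detbar {n : ℕ} (x : Fin (n + 2) → ℝ) : ℝ := (x 0 + x 1) ^ 2 - 2 * (enormEuc (tl x)) ^ 2

/-- `det(x) = x_1² + x_2² - ‖x̄‖²`. -/
def det2 {n : ℕ} (x : Fin (n + 2) → ℝ) : ℝ := (x 0) ^ 2 + (x 1) ^ 2 - (enormEuc (tl x)) ^ 2

/-- `det_(x) = 2 x_1 x_2 - ‖x̄‖²`. -/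
def detund {n : ℕ} (x : Fin (n + 2) → ℝ) : ℝ := 2 * x 0 * x 1 - (enormEuc (tl x)) ^ 2

/-- Membership in the type-2 second order cone `Υ^n`. -/
def inCone {n : ℕ} (x : Fin (n + 2) → ℝ) : Prop := 0 ≤ lam1 x ∧ 0 ≤ lam2 x

/-- Membership in the interior `Υ^n_+` of the type-2 second order cone. -/
def inConeInt {n : ℕ} (x : Fin (n + 2) → ℝ) : Prop := 0 < lam1 x ∧ 0 < lam2 x

/-- The unit element `e = (1, 0, …, 0)`. -/
def eVec {n : ℕ} : Fin (n + 2) → ℝ := fun i => if (i : ℕ) = 0 then 1 else 0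

/-- The spectral vector `g(x) = g(λ1(x)) v1 + g(λ2(x)) v2 + g(λ4(x)) v4`.
Its tail entries are `(g(λ4(x)) - g(λ2(x))) xᵢ / (2√2 ‖x̄‖)` when `x̄ ≠ 0`;
when `x̄ = 0` the written formula evaluates to `0` automatically since then
`xᵢ = 0` for `i ≥ 2`. -/
def specVec {n : ℕ} (g : ℝ → ℝ) (x : Fin (n + 2) → ℝ) : Fin (n + 2) → ℝ :=
  fun i =>
    if (i : ℕ) = 0 then (1 / 2) * g (lam1 x) + (1 / 4) * g (lam2 x) + (1 / 4) * g (lam4 x)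
    else if (i : ℕ) = 1 then -(1 / 2) * g (lam1 x) + (1 / 4) * g (lam2 x) + (1 / 4) * g (lam4 x)
    else (g (lam4 x) - g (lam2 x)) * x i / (2 * Real.sqrt 2 * enormEuc (tl x))

/-- The barrier value `Ψ(x) = ψ(λ1(x)) + ½ψ(λ2(x)) + ½ψ(λ4(x))`. -/
def Psi {n : ℕ} (g : ℝ → ℝ) (x : Fin (n + 2) → ℝ) : ℝ :=
  g (lam1 x) + (1 / 2) * g (lam2 x) + (1 / 2) * g (lam4 x)

/-- The barrier value of a block vector. -/
def PsiBlk {N : ℕ} {nf : Fin N → ℕ} (g : ℝ → ℝ) (v : ∀ j, Fin (nf j + 2) → ℝ) : ℝ :=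
  ∑ j, Psi g (v j)

/-- The norm-based proximity `δ(v) = (1/√2) (Σⱼ ‖ψ'(vʲ)‖²)^{1/2}`. -/
def deltaBlk {N : ℕ} {nf : Fin N → ℕ} (g : ℝ → ℝ) (v : ∀ j, Fin (nf j + 2) → ℝ) : ℝ :=
  (1 / Real.sqrt 2) * Real.sqrt (∑ j, (enormEuc (specVec g (v j))) ^ 2)

/-- `λ_min(v) = minⱼ min{λ1(vʲ), λ2(vʲ)}`. -/
def lamMin {N : ℕ} {nf : Fin N → ℕ} (v : ∀ j, Fin (nf j + 2) → ℝ) : ℝ :=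
  ⨅ j, min (lam1 (v j)) (lam2 (v j))

/-- `ψ` is a kernel function (with first and second derivatives `ψ'`, `ψ''`):
three times differentiability of the third derivative is recorded in
`IsEligible` below; here we record `ψ(1) = ψ'(1) = 0`, `ψ'' > 0` on `(0,∞)`,
and the barrier property `ψ(t) → ∞` as `t → 0⁺` and as `t → ∞`. -/
def IsKernel (f f' f'' : ℝ → ℝ) : Prop :=
  (∀ t > (0 : ℝ), HasDerivAt f (f' t) t) ∧
  (∀ t > (0 : ℝ), HasDerivAt f' (f'' t) t) ∧
  f 1 = 0 ∧ f' 1 = 0 ∧ (∀ t > (0 : ℝ), 0 < f'' t) ∧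
  Filter.Tendsto f (nhdsWithin 0 (Set.Ioi 0)) Filter.atTop ∧
  Filter.Tendsto f Filter.atTop Filter.atTop

/-- Eligibility conditions for a kernel function `ψ` (with derivatives
`ψ'`, `ψ''`, `ψ'''`). -/
def IsEligible (f f' f'' f''' : ℝ → ℝ) : Prop :=
  (∀ t > (0 : ℝ), HasDerivAt f'' (f''' t) t) ∧
  (∀ t : ℝ, 0 < t → t < 1 → 0 < t * f'' t + f' t) ∧
  (∀ t : ℝ, 1 < t → 0 < t * f'' t - f' t) ∧
  (∀ t > (0 : ℝ), f''' t < 0) ∧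
  (∀ t : ℝ, 0 < t → t < 1 → 0 < 2 * (f'' t) ^ 2 - f' t * f''' t) ∧
  (∀ t β : ℝ, 1 < t → 1 < β → 0 < f'' t * f' (β * t) - β * f' t * f'' (β * t))

section Core
open Set


variable {f f' f'' f''' ϱ : ℝ → ℝ}
variable (hd1 : ∀ t > (0:ℝ), HasDerivAt f (f' t) t)
variable (hd2 : ∀ t > (0:ℝ), HasDerivAt f' (f'' t) t)
variable (hd3 : ∀ t > (0:ℝ), HasDerivAt f'' (f''' t) t)
variable (hf1 : f 1 = 0) (hf'1 : f' 1 = 0)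
variable (hf''pos : ∀ t > (0:ℝ), 0 < f'' t)
variable (hf'''neg : ∀ t > (0:ℝ), f''' t < 0)
variable (hϱ : ∀ s : ℝ, 0 ≤ s → 1 ≤ ϱ s ∧ f (ϱ s) = s)

include hd1 hd2 hd3 hf1 hf'1 hf''pos hf'''neg hϱ

lemma fp_strictMono : StrictMonoOn f' (Ioi 0) := by
  apply strictMonoOn_of_deriv_pos (convex_Ioi 0)
    (fun x hx => (hd2 x hx).continuousAt.continuousWithinAt)
  intro x hx
  rw [interior_Ioi] at hx
  rw [(hd2 x hx).deriv]
  exact hf''pos x hx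

lemma fpp_strictAnti : StrictAntiOn f'' (Ioi 0) := by
  apply strictAntiOn_of_deriv_neg (convex_Ioi 0)
    (fun x hx => (hd3 x hx).continuousAt.continuousWithinAt)
  intro x hx
  rw [interior_Ioi] at hx
  rw [(hd3 x hx).deriv]
  exact hf'''neg x hx

lemma fp_neg : ∀ t : ℝ, 0 < t → t < 1 → f' t < 0 := fun t h0 h1 => by
  have := fp_strictMono hd1 hd2 hd3 hf1 hf'1 hf''pos hf'''neg hϱ (mem_Ioi.2 h0) (mem_Ioi.2 one_pos) h1
  rwa [hf'1] at this

lemma fp_pos : ∀ t : ℝ, 1 < t → 0 < f' t := fun t h1 => by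
  have := fp_strictMono hd1 hd2 hd3 hf1 hf'1 hf''pos hf'''neg hϱ (mem_Ioi.2 one_pos) (mem_Ioi.2 (lt_trans one_pos h1)) h1
  rwa [hf'1] at this

lemma f_strictMono : StrictMonoOn f (Ici 1) := by
  apply strictMonoOn_of_deriv_pos (convex_Ici 1)
    (fun x hx => (hd1 x (lt_of_lt_of_le one_pos hx)).continuousAt.continuousWithinAt)
  intro x hx
  rw [interior_Ici] at hx
  rw [(hd1 x (lt_trans one_pos hx)).deriv]
  exact fp_pos hd1 hd2 hd3 hf1 hf'1 hf''pos hf'''neg hϱ x hx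

lemma f_strictAnti : StrictAntiOn f (Ioc 0 1) := by
  apply strictAntiOn_of_deriv_neg (convex_Ioc 0 1)
    (fun x hx => (hd1 x hx.1).continuousAt.continuousWithinAt)
  intro x hx
  rw [interior_Ioc] at hx
  rw [(hd1 x hx.1).deriv]
  exact fp_neg hd1 hd2 hd3 hf1 hf'1 hf''pos hf'''neg hϱ x hx.1 hx.2

lemma f_nonneg : ∀ t : ℝ, 0 < t → 0 ≤ f t := by
  intro t ht
  rcases le_or_gt 1 t with h | h
  · have := (f_strictMono hd1 hd2 hd3 hf1 hf'1 hf''pos hf'''neg hϱ).monotoneOn self_mem_Ici h h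
    rwa [hf1] at this
  · have := (f_strictAnti hd1 hd2 hd3 hf1 hf'1 hf''pos hf'''neg hϱ).antitoneOn ⟨ht, h.le⟩ ⟨one_pos, le_refl 1⟩ h.le
    rwa [hf1] at this

lemma f_pos_of_lt_one : ∀ t : ℝ, 0 < t → t < 1 → 0 < f t := by
  intro t ht h1
  have := f_strictAnti hd1 hd2 hd3 hf1 hf'1 hf''pos hf'''neg hϱ ⟨ht, h1.le⟩ ⟨one_pos, le_refl 1⟩ h1
  rwa [hf1] at this

lemma rho_f : ∀ t : ℝ, 1 ≤ t → ϱ (f t) = t := by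
  intro t ht
  have hft : 0 ≤ f t := f_nonneg hd1 hd2 hd3 hf1 hf'1 hf''pos hf'''neg hϱ t (lt_of_lt_of_le one_pos ht)
  obtain ⟨h1, h2⟩ := hϱ (f t) hft
  exact (f_strictMono hd1 hd2 hd3 hf1 hf'1 hf''pos hf'''neg hϱ).injOn h1 ht h2

lemma rho_zero : ϱ 0 = 1 := by
  have := rho_f hd1 hd2 hd3 hf1 hf'1 hf''pos hf'''neg hϱ 1 le_rfl
  rwa [hf1] at this

lemma rho_gt_one : ∀ s : ℝ, 0 < s → 1 < ϱ s := by
  intro s hs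
  rcases lt_or_eq_of_le (hϱ s hs.le).1 with h | h
  · exact h
  · exfalso
    have := (hϱ s hs.le).2
    rw [← h, hf1] at this
    exact hs.ne this

lemma rho_mono : MonotoneOn ϱ (Ici 0) := by
  intro s₁ h₁ s₂ h₂ hle
  by_contra hlt
  push_neg at hlt
  have := f_strictMono hd1 hd2 hd3 hf1 hf'1 hf''pos hf'''neg hϱ (hϱ s₂ h₂).1 (hϱ s₁ h₁).1 hlt
  rw [(hϱ s₁ h₁).2, (hϱ s₂ h₂).2] at this
  exact absurd hle (not_le.2 this)

lemma rho_contAt : ∀ s : ℝ, 0 < s → ContinuousAt ϱ s := by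
  intro s hs
  apply continuousAt_of_monotoneOn_of_image_mem_nhds
    (rho_mono hd1 hd2 hd3 hf1 hf'1 hf''pos hf'''neg hϱ) (Ici_mem_nhds hs)
  have hsub : Ioi (1:ℝ) ⊆ ϱ '' (Ici 0) := by
    intro t ht
    refine ⟨f t, f_nonneg hd1 hd2 hd3 hf1 hf'1 hf''pos hf'''neg hϱ t (lt_trans one_pos ht), ?_⟩
    exact rho_f hd1 hd2 hd3 hf1 hf'1 hf''pos hf'''neg hϱ t (le_of_lt ht)
  exact Filter.mem_of_superset (Ioi_mem_nhds (rho_gt_one hd1 hd2 hd3 hf1 hf'1 hf''pos hf'''neg hϱ s hs)) hsub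

lemma rho_contWithin0 : ContinuousWithinAt ϱ (Ici 0) 0 := by
  apply continuousWithinAt_right_of_monotoneOn_of_image_mem_nhdsWithin
    (rho_mono hd1 hd2 hd3 hf1 hf'1 hf''pos hf'''neg hϱ) self_mem_nhdsWithin
  have hsub : Ici (1:ℝ) ⊆ ϱ '' (Ici 0) := by
    intro t ht
    refine ⟨f t, f_nonneg hd1 hd2 hd3 hf1 hf'1 hf''pos hf'''neg hϱ t (lt_of_lt_of_le one_pos ht), ?_⟩
    exact rho_f hd1 hd2 hd3 hf1 hf'1 hf''pos hf'''neg hϱ t ht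
  rw [rho_zero hd1 hd2 hd3 hf1 hf'1 hf''pos hf'''neg hϱ]
  exact Filter.mem_of_superset self_mem_nhdsWithin hsub

lemma rho_hasDeriv : ∀ s : ℝ, 0 < s → HasDerivAt ϱ (f' (ϱ s))⁻¹ s := by
  intro s hs
  have h1 : 1 < ϱ s := rho_gt_one hd1 hd2 hd3 hf1 hf'1 hf''pos hf'''neg hϱ s hs
  apply HasDerivAt.of_local_left_inverse (rho_contAt hd1 hd2 hd3 hf1 hf'1 hf''pos hf'''neg hϱ s hs)
    (hd1 (ϱ s) (lt_trans one_pos h1))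
    (ne_of_gt (fp_pos hd1 hd2 hd3 hf1 hf'1 hf''pos hf'''neg hϱ (ϱ s) h1))
  filter_upwards [Ioi_mem_nhds hs] with y hy
  exact (hϱ y (le_of_lt hy)).2

set_option linter.unusedSectionVars false

lemma fp_rho_nonneg : ∀ s : ℝ, 0 ≤ s → 0 ≤ f' (ϱ s) := by
  intro s hs
  rcases lt_or_eq_of_le (hϱ s hs).1 with h | h
  · exact le_of_lt (fp_pos hd1 hd2 hd3 hf1 hf'1 hf''pos hf'''neg hϱ (ϱ s) h)
  · rw [← h, hf'1]

lemma rho_pos : ∀ s : ℝ, 0 ≤ s → 0 < ϱ s := fun s hs =>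
  lt_of_lt_of_le one_pos (hϱ s hs).1

lemma phi_hasDeriv : ∀ s : ℝ, 0 < s →
    HasDerivAt (fun u => (f' (ϱ u))^2) (2 * f'' (ϱ s)) s := by
  intro s hs
  have h1 : 1 < ϱ s := rho_gt_one hd1 hd2 hd3 hf1 hf'1 hf''pos hf'''neg hϱ s hs
  have hne : f' (ϱ s) ≠ 0 := ne_of_gt (fp_pos hd1 hd2 hd3 hf1 hf'1 hf''pos hf'''neg hϱ (ϱ s) h1)
  have h := ((hd2 (ϱ s) (lt_trans one_pos h1)).comp s
    (rho_hasDeriv hd1 hd2 hd3 hf1 hf'1 hf''pos hf'''neg hϱ s hs)).pow 2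
  refine h.congr_deriv ?_
  simp only [Function.comp_apply]
  field_simp
  ring

lemma phi_contOn : ContinuousOn (fun u => (f' (ϱ u))^2) (Ici 0) := by
  intro s hs
  rcases eq_or_lt_of_le (mem_Ici.1 hs) with h | h
  · have hc : ContinuousAt (fun t => (f' t)^2) (ϱ s) :=
      ((hd2 (ϱ s) (rho_pos hd1 hd2 hd3 hf1 hf'1 hf''pos hf'''neg hϱ s hs)).continuousAt).pow 2
    have := hc.comp_continuousWithinAt (h ▸ rho_contWithin0 hd1 hd2 hd3 hf1 hf'1 hf''pos hf'''neg hϱ)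
    exact h ▸ this
  · exact (phi_hasDeriv hd1 hd2 hd3 hf1 hf'1 hf''pos hf'''neg hϱ s h).continuousAt.continuousWithinAt

lemma phi_zero : (f' (ϱ 0))^2 = 0 := by
  rw [rho_zero hd1 hd2 hd3 hf1 hf'1 hf''pos hf'''neg hϱ, hf'1]
  norm_num

lemma phi_step1 : ∀ t : ℝ, 0 < t → (f' (ϱ (f t)))^2 ≤ (f' t)^2 := by
  intro t ht
  rcases le_or_gt 1 t with h | h
  · rw [rho_f hd1 hd2 hd3 hf1 hf'1 hf''pos hf'''neg hϱ t h]
  · -- t < 1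
    set G : ℝ → ℝ := fun u => (f' u)^2 - (f' (ϱ (f u)))^2 with hG
    have hpos : ∀ u ∈ Icc t (1:ℝ), 0 < u := fun u hu => lt_of_lt_of_le ht hu.1
    have hGd : ∀ u ∈ Ioo t (1:ℝ), HasDerivAt G (2 * f' u * (f'' u - f'' (ϱ (f u)))) u := by
      intro u hu
      have hu0 : 0 < u := lt_trans ht hu.1
      have hfu : 0 < f u := f_pos_of_lt_one hd1 hd2 hd3 hf1 hf'1 hf''pos hf'''neg hϱ u hu0 hu.2
      have h1 : HasDerivAt (fun u => (f' u)^2) (2 * f' u ^ 1 * f'' u) u := (hd2 u hu0).pow 2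
      have h2 : HasDerivAt (fun u => (f' (ϱ (f u)))^2) (2 * f'' (ϱ (f u)) * f' u) u :=
        (phi_hasDeriv hd1 hd2 hd3 hf1 hf'1 hf''pos hf'''neg hϱ (f u) hfu).comp u (hd1 u hu0)
      have := h1.sub h2
      refine this.congr_deriv ?_
      ring
    have hGc : ContinuousOn G (Icc t 1) := by
      apply ContinuousOn.sub
      · exact fun u hu => (((hd2 u (hpos u hu)).continuousAt).pow 2).continuousWithinAt
      · apply ContinuousOn.comp (phi_contOn hd1 hd2 hd3 hf1 hf'1 hf''pos hf'''neg hϱ)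
          (fun u hu => (hd1 u (hpos u hu)).continuousAt.continuousWithinAt)
        exact fun u hu => f_nonneg hd1 hd2 hd3 hf1 hf'1 hf''pos hf'''neg hϱ u (hpos u hu)
    have hanti : AntitoneOn G (Icc t 1) := by
      apply antitoneOn_of_deriv_nonpos (convex_Icc t 1) hGc
      · rw [interior_Icc]
        exact fun u hu => (hGd u hu).differentiableAt.differentiableWithinAt
      · rw [interior_Icc]
        intro u hu
        rw [(hGd u hu).deriv]
        have hu0 : 0 < u := lt_trans ht hu.1
        have hfu : 0 < f u := f_pos_of_lt_one hd1 hd2 hd3 hf1 hf'1 hf''pos hf'''neg hϱ u hu0 hu.2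
        have h1 : 1 < ϱ (f u) := rho_gt_one hd1 hd2 hd3 hf1 hf'1 hf''pos hf'''neg hϱ (f u) hfu
        have hlt : f'' (ϱ (f u)) < f'' u :=
          fpp_strictAnti hd1 hd2 hd3 hf1 hf'1 hf''pos hf'''neg hϱ (mem_Ioi.2 hu0)
            (mem_Ioi.2 (lt_trans one_pos h1)) (lt_trans hu.2 h1)
        have hfp : f' u < 0 := fp_neg hd1 hd2 hd3 hf1 hf'1 hf''pos hf'''neg hϱ u hu0 hu.2
        nlinarith
    have hG1 : G 1 = 0 := by
      simp only [hG, hf1, hf'1]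
      rw [rho_zero hd1 hd2 hd3 hf1 hf'1 hf''pos hf'''neg hϱ, hf'1]
      norm_num
    have := hanti (left_mem_Icc.2 (le_of_lt h)) (right_mem_Icc.2 (le_of_lt h)) (le_of_lt h)
    rw [hG1] at this
    simpa [hG, sub_nonneg] using this

lemma phi_subadd : ∀ s₁ s₂ : ℝ, 0 ≤ s₁ → 0 ≤ s₂ →
    (f' (ϱ (s₁ + s₂)))^2 ≤ (f' (ϱ s₁))^2 + (f' (ϱ s₂))^2 := by
  intro s₁ s₂ h₁ h₂
  rcases eq_or_lt_of_le h₂ with h | h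
  · rw [← h, add_zero, phi_zero hd1 hd2 hd3 hf1 hf'1 hf''pos hf'''neg hϱ, add_zero]
  · set H : ℝ → ℝ := fun u => (f' (ϱ (u + s₂)))^2 - (f' (ϱ u))^2 with hH
    have hHd : ∀ u ∈ Ioo 0 s₁, HasDerivAt H (2 * f'' (ϱ (u + s₂)) - 2 * f'' (ϱ u)) u := by
      intro u hu
      have hu0 : 0 < u := hu.1
      have h1 : HasDerivAt (fun u => (f' (ϱ (u + s₂)))^2) (2 * f'' (ϱ (u + s₂)) * 1) u := by
        have := (phi_hasDeriv hd1 hd2 hd3 hf1 hf'1 hf''pos hf'''neg hϱ (u + s₂)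
          (by linarith)).comp u ((hasDerivAt_id u).add_const s₂)
        exact this
      have h2 := phi_hasDeriv hd1 hd2 hd3 hf1 hf'1 hf''pos hf'''neg hϱ u hu0
      have := h1.sub h2
      refine this.congr_deriv ?_
      ring
    have hHc : ContinuousOn H (Icc 0 s₁) := by
      apply ContinuousOn.sub
      · apply ContinuousOn.comp (phi_contOn hd1 hd2 hd3 hf1 hf'1 hf''pos hf'''neg hϱ)
          (Continuous.continuousOn (by continuity))
        exact fun u hu => by simp only [Set.mem_Ici]; linarith [hu.1]
      · exact (phi_contOn hd1 hd2 hd3 hf1 hf'1 hf''pos hf'''neg hϱ).mono Icc_subset_Ici_self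
    have hanti : AntitoneOn H (Icc 0 s₁) := by
      apply antitoneOn_of_deriv_nonpos (convex_Icc 0 s₁) hHc
      · rw [interior_Icc]
        exact fun u hu => (hHd u hu).differentiableAt.differentiableWithinAt
      · rw [interior_Icc]
        intro u hu
        rw [(hHd u hu).deriv]
        have hmono : ϱ u ≤ ϱ (u + s₂) :=
          rho_mono hd1 hd2 hd3 hf1 hf'1 hf''pos hf'''neg hϱ (le_of_lt hu.1)
            (by simp only [Set.mem_Ici]; linarith [hu.1]) (by linarith)
        have := (fpp_strictAnti hd1 hd2 hd3 hf1 hf'1 hf''pos hf'''neg hϱ).antitoneOn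
          (mem_Ioi.2 (rho_pos hd1 hd2 hd3 hf1 hf'1 hf''pos hf'''neg hϱ u (le_of_lt hu.1)))
          (mem_Ioi.2 (rho_pos hd1 hd2 hd3 hf1 hf'1 hf''pos hf'''neg hϱ (u + s₂)
            (by linarith [hu.1]))) hmono
        linarith
    have := hanti (left_mem_Icc.2 h₁) (right_mem_Icc.2 h₁) h₁
    simp only [hH, zero_add] at this
    have h0 := phi_zero hd1 hd2 hd3 hf1 hf'1 hf''pos hf'''neg hϱ
    linarith

lemma phi_sum {ι : Type*} (s : Finset ι) (a : ι → ℝ) (ha : ∀ i ∈ s, 0 ≤ a i) :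
    (f' (ϱ (∑ i ∈ s, a i)))^2 ≤ ∑ i ∈ s, (f' (ϱ (a i)))^2 := by
  classical
  induction s using Finset.cons_induction with
  | empty => simp [phi_zero hd1 hd2 hd3 hf1 hf'1 hf''pos hf'''neg hϱ]
  | cons i s his ih =>
    rw [Finset.sum_cons, Finset.sum_cons]
    have hai : 0 ≤ a i := ha i (Finset.mem_cons_self i s)
    have has : ∀ j ∈ s, 0 ≤ a j := fun j hj => ha j (Finset.mem_cons_of_mem hj)
    have hsum : 0 ≤ ∑ j ∈ s, a j := Finset.sum_nonneg has
    calc (f' (ϱ (a i + ∑ j ∈ s, a j)))^2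
        ≤ (f' (ϱ (a i)))^2 + (f' (ϱ (∑ j ∈ s, a j)))^2 :=
          phi_subadd hd1 hd2 hd3 hf1 hf'1 hf''pos hf'''neg hϱ _ _ hai hsum
      _ ≤ (f' (ϱ (a i)))^2 + ∑ j ∈ s, (f' (ϱ (a j)))^2 := by linarith [ih has]

end Core


lemma enorm_sq {n : ℕ} (x : Fin n → ℝ) : (enormEuc x)^2 = ∑ i, (x i)^2 :=
  Real.sq_sqrt (Finset.sum_nonneg fun i _ => sq_nonneg _)

lemma enorm_nonneg' {n : ℕ} (x : Fin n → ℝ) : 0 ≤ enormEuc x := Real.sqrt_nonneg _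

lemma tl_sq {n : ℕ} (x : Fin (n + 2) → ℝ) :
    (enormEuc (tl x))^2 = ∑ j : Fin n, (x j.succ.succ)^2 := by
  rw [enorm_sq, Fin.sum_univ_succ, Fin.sum_univ_succ]
  have h0 : tl x 0 = 0 := by simp [tl]
  have h1 : tl x (Fin.succ 0) = 0 := by simp [tl]
  have h1' : tl x (1 : Fin (n + 2)) = 0 := by simp [tl]
  have h2 : ∀ j : Fin n, tl x j.succ.succ = x j.succ.succ := by
    intro j; simp [tl, Fin.val_succ]
  simp [h0, h1, h1', h2]

lemma tl_eq_zero {n : ℕ} (x : Fin (n + 2) → ℝ) (h : enormEuc (tl x) = 0) :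
    ∀ j : Fin n, x j.succ.succ = 0 := by
  intro j
  have h2 : (enormEuc (tl x))^2 = 0 := by rw [h]; ring
  rw [tl_sq] at h2
  have := (Finset.sum_eq_zero_iff_of_nonneg (fun i _ => sq_nonneg (x i.succ.succ))).1 h2
    j (Finset.mem_univ j)
  exact pow_eq_zero_iff (by norm_num) |>.1 this

lemma specVec_norm_sq {n : ℕ} (g : ℝ → ℝ) (x : Fin (n + 2) → ℝ) :
    (enormEuc (specVec g x))^2 =
      (1/2) * (g (lam1 x))^2 + (1/4) * (g (lam2 x))^2 + (1/4) * (g (lam4 x))^2 := by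
  rw [enorm_sq, Fin.sum_univ_succ, Fin.sum_univ_succ]
  have e0 : specVec g x 0 =
      (1 / 2) * g (lam1 x) + (1 / 4) * g (lam2 x) + (1 / 4) * g (lam4 x) := by
    simp [specVec]
  have e1 : specVec g x (Fin.succ 0) =
      -(1 / 2) * g (lam1 x) + (1 / 4) * g (lam2 x) + (1 / 4) * g (lam4 x) := by
    simp [specVec]
  have e2 : ∀ j : Fin n, specVec g x j.succ.succ =
      (g (lam4 x) - g (lam2 x)) * x j.succ.succ / (2 * Real.sqrt 2 * enormEuc (tl x)) := by
    intro j; simp [specVec, Fin.val_succ]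
  have e1' : specVec g x (1 : Fin (n + 2)) =
      -(1 / 2) * g (lam1 x) + (1 / 4) * g (lam2 x) + (1 / 4) * g (lam4 x) := by
    simp [specVec]
  simp only [e0, e1, e1', e2]
  rcases eq_or_lt_of_le (enorm_nonneg' (tl x)) with hE | hE
  · -- enormEuc (tl x) = 0
    have hz := tl_eq_zero x hE.symm
    have h24 : lam2 x = lam4 x := by simp [lam2, lam4, ← hE]
    have : ∀ j : Fin n, ((g (lam4 x) - g (lam2 x)) * x j.succ.succ /
        (2 * Real.sqrt 2 * enormEuc (tl x)))^2 = 0 := by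
      intro j; rw [hz j]; simp
    rw [Finset.sum_congr rfl (fun j _ => this j), Finset.sum_const, smul_zero]
    rw [h24]; ring
  · have hsum : ∀ j : Fin n, ((g (lam4 x) - g (lam2 x)) * x j.succ.succ /
        (2 * Real.sqrt 2 * enormEuc (tl x)))^2 =
        ((g (lam4 x) - g (lam2 x)) / (2 * Real.sqrt 2 * enormEuc (tl x)))^2 * (x j.succ.succ)^2 := by
      intro j; ring
    rw [Finset.sum_congr rfl (fun j _ => hsum j), ← Finset.mul_sum, ← tl_sq]
    have hs2 : Real.sqrt 2 ^ 2 = 2 := Real.sq_sqrt (by norm_num)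
    have hEne : enormEuc (tl x) ≠ 0 := ne_of_gt hE
    have hD : (2 * Real.sqrt 2 * enormEuc (tl x))^2 = 8 * (enormEuc (tl x))^2 := by
      rw [mul_pow, mul_pow, hs2]; ring
    have : ((g (lam4 x) - g (lam2 x)) / (2 * Real.sqrt 2 * enormEuc (tl x)))^2 * (enormEuc (tl x))^2 =
        (g (lam4 x) - g (lam2 x))^2 / 8 := by
      rw [div_pow, hD]
      field_simp
    rw [this]
    ring


/-- for an eligible kernel function `ψ` with inverse `ϱ` (of the
restriction of `ψ` to `[1,∞)`), and a block vector `v` with blocks in `Υ^{n_j}_+`,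
`δ(v) ≥ (1/(2√2)) ψ'(ϱ(2Ψ(v)))`. -/
theorem stmt17 (f f' f'' f''' : ℝ → ℝ)
    (hker : IsKernel f f' f'') (hel : IsEligible f f' f'' f''')
    (ϱ : ℝ → ℝ) (hϱ : ∀ s : ℝ, 0 ≤ s → 1 ≤ ϱ s ∧ f (ϱ s) = s)
    (N : ℕ) (hN : 1 ≤ N) (nf : Fin N → ℕ)
    (v : ∀ j : Fin N, Fin (nf j + 2) → ℝ) (hv : ∀ j, inConeInt (v j)) :
    deltaBlk f' v ≥ (1 / (2 * Real.sqrt 2)) * f' (ϱ (2 * PsiBlk f v)) := by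
  obtain ⟨hd1, hd2, hf1, hf'1, hf''pos, -, -⟩ := hker
  obtain ⟨hd3, -, -, hf'''neg, -, -⟩ := hel
  have hlam : ∀ j, 0 < lam1 (v j) ∧ 0 < lam2 (v j) ∧ 0 < lam4 (v j) := by
    intro j
    obtain ⟨h1, h2⟩ := hv j
    refine ⟨h1, h2, ?_⟩
    have hE : 0 ≤ Real.sqrt 2 * enormEuc (tl (v j)) :=
      mul_nonneg (Real.sqrt_nonneg 2) (Real.sqrt_nonneg _)
    unfold lam2 at h2
    unfold lam4
    linarith
  have ha : ∀ j, 0 ≤ 2 * Psi f (v j) := by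
    intro j
    obtain ⟨h1, h2, h4⟩ := hlam j
    have e1 := f_nonneg hd1 hd2 hd3 hf1 hf'1 hf''pos hf'''neg hϱ _ h1
    have e2 := f_nonneg hd1 hd2 hd3 hf1 hf'1 hf''pos hf'''neg hϱ _ h2
    have e4 := f_nonneg hd1 hd2 hd3 hf1 hf'1 hf''pos hf'''neg hϱ _ h4
    unfold Psi
    linarith
  set S := 2 * PsiBlk f v with hSdef
  have hSsum : S = ∑ j, 2 * Psi f (v j) := by
    rw [hSdef]
    unfold PsiBlk
    rw [Finset.mul_sum]
  have hS0 : 0 ≤ S := by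
    rw [hSsum]
    exact Finset.sum_nonneg fun j _ => ha j
  have hstep : (f' (ϱ S))^2 ≤ ∑ j, (f' (ϱ (2 * Psi f (v j))))^2 := by
    rw [hSsum]
    exact phi_sum hd1 hd2 hd3 hf1 hf'1 hf''pos hf'''neg hϱ Finset.univ _ (fun j _ => ha j)
  have hblock : ∀ j, (f' (ϱ (2 * Psi f (v j))))^2 ≤ 4 * (enormEuc (specVec f' (v j)))^2 := by
    intro j
    obtain ⟨h1, h2, h4⟩ := hlam j
    have e1 := f_nonneg hd1 hd2 hd3 hf1 hf'1 hf''pos hf'''neg hϱ _ h1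
    have e2 := f_nonneg hd1 hd2 hd3 hf1 hf'1 hf''pos hf'''neg hϱ _ h2
    have e4 := f_nonneg hd1 hd2 hd3 hf1 hf'1 hf''pos hf'''neg hϱ _ h4
    have key : 2 * Psi f (v j) = f (lam1 (v j)) +
        (f (lam1 (v j)) + (f (lam2 (v j)) + f (lam4 (v j)))) := by
      unfold Psi; ring
    have c1 := phi_subadd hd1 hd2 hd3 hf1 hf'1 hf''pos hf'''neg hϱ (f (lam1 (v j)))
      (f (lam1 (v j)) + (f (lam2 (v j)) + f (lam4 (v j)))) e1 (by linarith)
    have c2 := phi_subadd hd1 hd2 hd3 hf1 hf'1 hf''pos hf'''neg hϱ (f (lam1 (v j)))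
      (f (lam2 (v j)) + f (lam4 (v j))) e1 (by linarith)
    have c3 := phi_subadd hd1 hd2 hd3 hf1 hf'1 hf''pos hf'''neg hϱ (f (lam2 (v j)))
      (f (lam4 (v j))) e2 e4
    have s1 := phi_step1 hd1 hd2 hd3 hf1 hf'1 hf''pos hf'''neg hϱ _ h1
    have s2 := phi_step1 hd1 hd2 hd3 hf1 hf'1 hf''pos hf'''neg hϱ _ h2
    have s4 := phi_step1 hd1 hd2 hd3 hf1 hf'1 hf''pos hf'''neg hϱ _ h4
    have hnrm := specVec_norm_sq f' (v j)
    rw [key]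
    linarith
  set T := ∑ j, (enormEuc (specVec f' (v j)))^2 with hTdef
  have hT0 : 0 ≤ T := Finset.sum_nonneg fun j _ => sq_nonneg _
  have hT : (f' (ϱ S))^2 ≤ 4 * T := by
    calc (f' (ϱ S))^2 ≤ ∑ j, (f' (ϱ (2 * Psi f (v j))))^2 := hstep
      _ ≤ ∑ j, 4 * (enormEuc (specVec f' (v j)))^2 := Finset.sum_le_sum fun j _ => hblock j
      _ = 4 * T := by rw [hTdef, Finset.mul_sum]
  have hfρ0 : 0 ≤ f' (ϱ S) := fp_rho_nonneg hd1 hd2 hd3 hf1 hf'1 hf''pos hf'''neg hϱ S hS0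
  have hle : f' (ϱ S) ≤ 2 * Real.sqrt T := by
    have h4T : (f' (ϱ S))^2 ≤ (2 * Real.sqrt T)^2 := by
      rw [mul_pow, Real.sq_sqrt hT0]
      norm_num
      linarith
    calc f' (ϱ S) = Real.sqrt ((f' (ϱ S))^2) := (Real.sqrt_sq hfρ0).symm
      _ ≤ Real.sqrt ((2 * Real.sqrt T)^2) := Real.sqrt_le_sqrt h4T
      _ = 2 * Real.sqrt T := Real.sqrt_sq (by positivity)
  have hdelta : deltaBlk f' v = (1 / Real.sqrt 2) * Real.sqrt T := by
    unfold deltaBlk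
    rw [← hTdef]
  rw [ge_iff_le, hdelta]
  have hs2 : (0:ℝ) < Real.sqrt 2 := by positivity
  calc (1 / (2 * Real.sqrt 2)) * f' (ϱ S)
      ≤ (1 / (2 * Real.sqrt 2)) * (2 * Real.sqrt T) :=
        mul_le_mul_of_nonneg_left hle (by positivity)
    _ = (1 / Real.sqrt 2) * Real.sqrt T := by
        field_simp

end
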